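/- Let α > 0, δ > 0 and ξ ∈ ℝ². Let U(x) = log( 2α²δ^α / (δ^α + |x − ξ|^α)² ) be the standard singular bubble and define η₀(x) = −2δ^α/(δ^α + |x − ξ|^α). Then at every point x ∈ ℝ² with x ≠ ξ, one has Δη₀(x) + |x − ξ|^{α−2} · exp(U(x)) · η₀(x) = −|x − ξ|^{α−2} · exp(U(x)), where Δ denotes the Laplacian (the sum of the two second partial derivatives). -/

import Mathlib

/-! A function of `t = ‖y - ξ‖²` alone has Laplacian `4 (t G''(t) + G'(t))` in the plane (each
second partial derivative is `4 (yᵢ - ξᵢ)² G'' + 2 G'`, and the `(yᵢ - ξᵢ)²` add up to `t`).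
For `η₀` the profile is `G(t) = -2δ^α / (δ^α + t^(α/2))`, and both `Δη₀` and
`-|x - ξ|^(α-2) e^U (1 + η₀)` come out as
`2 α² δ^α |x - ξ|^(α-2) (δ^α - |x - ξ|^α) / (δ^α + |x - ξ|^α)³`. -/

open MeasureTheory Real

noncomputable section

/-- The plane `ℝ²`. -/
abbrev Plane := EuclideanSpace ℝ (Fin 2)

/-- The Laplacian of `f : ℝ² → ℝ`: the sum of the two second partial derivatives. -/
noncomputable def lap (f : Plane → ℝ) (x : Plane) : ℝ :=
  ∑ i : Fin 2,
    fderiv ℝ (fun y => fderiv ℝ f y (EuclideanSpace.single i 1)) x (EuclideanSpace.single i 1)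

/-- The standard singular bubble `U(x) = log(2α²δ^α / (δ^α + |x-ξ|^α)²)`. -/
noncomputable def bubble (α δ : ℝ) (ξ : Plane) (x : Plane) : ℝ :=
  Real.log (2 * α ^ 2 * δ ^ α / (δ ^ α + ‖x - ξ‖ ^ α) ^ 2)

/-- `Y₀(y) = (1 - |y|^α)/(1 + |y|^α)`. -/
noncomputable def Ynull (α : ℝ) (y : Plane) : ℝ :=
  (1 - ‖y‖ ^ α) / (1 + ‖y‖ ^ α)

open Filter Topology

section
variable {E : Type*} [NormedAddCommGroup E] [InnerProductSpace ℝ E] {G G' : ℝ → ℝ} {G'' : ℝ}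
  {ξ x : E}

open scoped RealInnerProductSpace

theorem fderiv_comp_norm_sub_sq_apply (hG : HasDerivAt G (G' (‖x - ξ‖ ^ 2)) (‖x - ξ‖ ^ 2))
    (v : E) : fderiv ℝ (fun y => G (‖y - ξ‖ ^ 2)) x v = G' (‖x - ξ‖ ^ 2) * (2 * ⟪x - ξ, v⟫) := by
  have h : HasFDerivAt (fun y => G (‖y - ξ‖ ^ 2)) _ x :=
    hG.comp_hasFDerivAt x (hasFDerivAt_sub_const ξ).norm_sq
  simp [h.fderiv, inner_sub_left]

theorem fderiv_fderiv_comp_norm_sub_sq_apply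
    (hG : ∀ᶠ s in 𝓝 (‖x - ξ‖ ^ 2), HasDerivAt G (G' s) s)
    (hG' : HasDerivAt G' G'' (‖x - ξ‖ ^ 2)) (v : E) :
    fderiv ℝ (fun y => fderiv ℝ (fun z => G (‖z - ξ‖ ^ 2)) y v) x v
      = 4 * ⟪x - ξ, v⟫ ^ 2 * G'' + 2 * ‖v‖ ^ 2 * G' (‖x - ξ‖ ^ 2) := by
  have hnear : ∀ᶠ y in 𝓝 x, HasDerivAt G (G' (‖y - ξ‖ ^ 2)) (‖y - ξ‖ ^ 2) :=
    (by fun_prop : Continuous fun y : E => ‖y - ξ‖ ^ 2).continuousAt.eventually hG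
  have hfirst : (fun y => fderiv ℝ (fun z => G (‖z - ξ‖ ^ 2)) y v) =ᶠ[𝓝 x]
      fun y => G' (‖y - ξ‖ ^ 2) * (2 * ⟪y - ξ, v⟫) :=
    hnear.mono fun y hy => fderiv_comp_norm_sub_sq_apply hy v
  have hG'x : HasFDerivAt (fun y => G' (‖y - ξ‖ ^ 2)) _ x :=
    hG'.comp_hasFDerivAt x (hasFDerivAt_sub_const ξ).norm_sq
  have hinner : HasFDerivAt (fun y => 2 * ⟪y - ξ, v⟫) _ x :=
    ((hasFDerivAt_sub_const ξ).inner ℝ (hasFDerivAt_const v x)).const_mul 2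
  rw [hfirst.fderiv_eq, (hG'x.fun_mul hinner).fderiv]
  simp only [add_apply, smul_apply,
    ContinuousLinearMap.comp_apply, ContinuousLinearMap.prod_apply, ContinuousLinearMap.id_apply,
    zero_apply, fderivInnerCLM_apply, coe_innerSL_apply, inner_zero_right,
    real_inner_self_eq_norm_sq, smul_eq_mul, nsmul_eq_mul, Nat.cast_ofNat,
    real_inner_comm v]
  ring
end

section
variable {d β s : ℝ}

theorem hasDerivAt_rpow_const_of_pos (hs : 0 < s) :
    HasDerivAt (fun s : ℝ => s ^ β) (β * s ^ β / s) s := by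
  simpa [mul_div_assoc, Real.rpow_sub_one hs.ne'] using
    Real.hasDerivAt_rpow_const (p := β) (Or.inl hs.ne')

theorem hasDerivAt_neg_two_mul_div_add_rpow (hd : 0 ≤ d) (hs : 0 < s) :
    HasDerivAt (fun s : ℝ => -2 * d / (d + s ^ β))
      (2 * d * β * s ^ β / (s * (d + s ^ β) ^ 2)) s := by
  have hp : 0 < s ^ β := Real.rpow_pos_of_pos hs β
  refine ((hasDerivAt_const s (-2 * d)).div
    ((hasDerivAt_rpow_const_of_pos hs).const_add d) (by positivity)).congr_deriv ?_
  field_simp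
  ring

theorem hasDerivAt_rpow_div_mul_add_rpow_sq (hd : 0 ≤ d) (hs : 0 < s) :
    HasDerivAt (fun s : ℝ => 2 * d * β * s ^ β / (s * (d + s ^ β) ^ 2))
      (2 * d * β * s ^ β * ((β - 1) * (d + s ^ β) - 2 * β * s ^ β) /
        (s ^ 2 * (d + s ^ β) ^ 3)) s := by
  have hp : 0 < s ^ β := Real.rpow_pos_of_pos hs β
  have hrpow := hasDerivAt_rpow_const_of_pos (β := β) hs
  refine ((hrpow.const_mul (2 * d * β)).fun_div
    ((hasDerivAt_id' s).fun_mul ((hrpow.const_add d).fun_pow 2)) (by positivity)).congr_deriv ?_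
  field_simp
  ring
end

theorem lap_comp_norm_sub_sq {G G' : ℝ → ℝ} {G'' : ℝ} {ξ x : Plane}
    (hG : ∀ᶠ s in 𝓝 (‖x - ξ‖ ^ 2), HasDerivAt G (G' s) s)
    (hG' : HasDerivAt G' G'' (‖x - ξ‖ ^ 2)) :
    lap (fun y => G (‖y - ξ‖ ^ 2)) x = 4 * (‖x - ξ‖ ^ 2 * G'' + G' (‖x - ξ‖ ^ 2)) := by
  rw [lap, Fin.sum_univ_two, fderiv_fderiv_comp_norm_sub_sq_apply hG hG',
    fderiv_fderiv_comp_norm_sub_sq_apply hG hG']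
  simp only [EuclideanSpace.inner_single_right, PiLp.norm_single]
  rw [EuclideanSpace.real_norm_sq_eq (x - ξ), Fin.sum_univ_two]
  simp only [PiLp.sub_apply, RCLike.conj_to_real, one_mul, norm_one, one_pow, mul_one]
  ring

theorem exp_bubble {α δ : ℝ} (hα : α ≠ 0) (hδ : 0 < δ) (ξ x : Plane) :
    Real.exp (bubble α δ ξ x) = 2 * α ^ 2 * δ ^ α / (δ ^ α + ‖x - ξ‖ ^ α) ^ 2 := by
  have : 0 < δ ^ α := Real.rpow_pos_of_pos hδ α
  rw [bubble, Real.exp_log (by positivity)]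

theorem sq_rpow_div_two {r : ℝ} (hr : 0 ≤ r) (α : ℝ) : (r ^ 2) ^ (α / 2) = r ^ α := by
  rw [← Real.rpow_natCast_mul hr, Nat.cast_ofNat, mul_div_cancel₀ α two_ne_zero]

theorem eta0_equation (α δ : ℝ) (hα : 0 < α) (hδ : 0 < δ) (ξ : Plane)
    (x : Plane) (hx : x ≠ ξ) :
    lap (fun x => -2 * δ ^ α / (δ ^ α + ‖x - ξ‖ ^ α)) x +
        ‖x - ξ‖ ^ (α - 2) * Real.exp (bubble α δ ξ x) *
          (-2 * δ ^ α / (δ ^ α + ‖x - ξ‖ ^ α)) =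
      -(‖x - ξ‖ ^ (α - 2) * Real.exp (bubble α δ ξ x)) := by
  have hd : 0 < δ ^ α := Real.rpow_pos_of_pos hδ α
  have hr : 0 < ‖x - ξ‖ := norm_pos_iff.mpr (sub_ne_zero.mpr hx)
  have hη : (fun x => -2 * δ ^ α / (δ ^ α + ‖x - ξ‖ ^ α))
      = fun y => -2 * δ ^ α / (δ ^ α + (‖y - ξ‖ ^ 2) ^ (α / 2)) := by
    simp only [sq_rpow_div_two (norm_nonneg _)]
  have ht : 0 < ‖x - ξ‖ ^ 2 := by positivity
  rw [hη, lap_comp_norm_sub_sq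
    ((lt_mem_nhds ht).mono fun s hs => hasDerivAt_neg_two_mul_div_add_rpow hd.le hs)
    (hasDerivAt_rpow_div_mul_add_rpow_sq hd.le ht), sq_rpow_div_two hr.le,
    exp_bubble hα.ne' hδ, Real.rpow_sub hr, Real.rpow_two]
  have hp : 0 < ‖x - ξ‖ ^ α := Real.rpow_pos_of_pos hr α
  field_simp
  ring
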